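/- arXiv:1807.09084 — 2 statements merged into one kernel-verified Lean document; each statement's English description precedes it below -/
import Mathlib

section
/- Let d ≥ 1 and let 𝖠 ⊆ M_d(ℝ) be compact and nonempty with a multicone (K_1,…,K_m) and transverse-defining vector w, and let Ω := {z ∈ ℂ^d : z ∈ ∪_{j=1}^m int(K_j^ℂ) and ⟨z,w⟩ = 1}. Then for every z ∈ Ω and every A ∈ 𝒮(𝖠), the real part of ⟨Az,w⟩ is nonzero: Re(⟨Az,w⟩) ≠ 0. -/
open scoped BigOperators Pointwise

noncomputable section

/-- The Euclidean norm of a finitely-indexed vector (real or complex entries). -/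
def enorm {ι : Type*} [Fintype ι] {E : Type*} [Norm E] (u : ι → E) : ℝ :=
  Real.sqrt (∑ i, ‖u i‖ ^ 2)

/-- The operator norm of a real matrix induced by the Euclidean norm. -/
def opNorm {ι : Type*} [Fintype ι] (A : Matrix ι ι ℝ) : ℝ :=
  sSup ((fun u : ι → ℝ => _root_.enorm (A.mulVec u)) '' {u : ι → ℝ | _root_.enorm u = 1})

/-- A multicone for a set of matrices (Definition 1.2). -/
def IsMulticone {ι : Type*} [Fintype ι] (S : Set (Matrix ι ι ℝ)) {m : ℕ}
    (K : Fin m → Set (ι → ℝ)) (w : ι → ℝ) : Prop :=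
  (∀ j, IsClosed (K j)) ∧ (∀ j, Convex ℝ (K j)) ∧ (∀ j, (interior (K j)).Nonempty) ∧
  (∀ j, ∀ c : ℝ, 0 ≤ c → ∀ u ∈ K j, c • u ∈ K j) ∧
  (∑ i, w i ^ 2 = 1) ∧
  (∀ u ∈ ⋃ j, K j, u ≠ 0 → 0 < ∑ i, u i * w i) ∧
  (∀ A ∈ S, ∀ j, ∃ ℓ, ∀ u ∈ K j, u ≠ 0 →
    A.mulVec u ∈ interior (K ℓ) ∨ -A.mulVec u ∈ interior (K ℓ)) ∧
  (∀ j₁ j₂, j₁ ≠ j₂ → K j₁ ∩ K j₂ = {0})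

/-- The set of matrices is multipositive if it admits a multicone. -/
def IsMultipositive {ι : Type*} [Fintype ι] (S : Set (Matrix ι ι ℝ)) : Prop :=
  ∃ (m : ℕ) (_ : 0 < m) (K : Fin m → Set (ι → ℝ)) (w : ι → ℝ), IsMulticone S K w

/-- The semigroup generated by a set of matrices. -/
def semigroupOf {ι : Type*} [Fintype ι] [DecidableEq ι] (S : Set (Matrix ι ι ℝ)) :
    Set (Matrix ι ι ℝ) :=
  {B | ∃ l : List (Matrix ι ι ℝ), l ≠ [] ∧ (∀ M ∈ l, M ∈ S) ∧ B = l.prod}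

/-- The complexification of a set in ℝ^ι. -/
def complexify {ι : Type*} (K : Set (ι → ℝ)) : Set (ι → ℂ) :=
  {z | ∃ (c : ℂ) (u v : ι → ℝ), u ∈ K ∧ v ∈ K ∧
    z = fun i => c * (((u i : ℂ) + (v i : ℂ)) + Complex.I * ((u i : ℂ) - (v i : ℂ)))}

/-- The action of a real matrix on complex vectors. -/
def mulVecC {ι : Type*} [Fintype ι] (A : Matrix ι ι ℝ) (z : ι → ℂ) : ι → ℂ :=
  (A.map (fun x : ℝ => (x : ℂ))).mulVec z

/-- An ℝ-cone: closed, convex, nonempty interior, positively homogeneous, proper. -/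
def IsRCone {ι : Type*} [Fintype ι] (K : Set (ι → ℝ)) : Prop :=
  IsClosed K ∧ Convex ℝ K ∧ (interior K).Nonempty ∧
  (∀ c : ℝ, 0 < c → c • K = K) ∧ K ∩ (-K) = {0}

end

/-!
Write `z ∈ K^ℂ` as `z = c (u - i v)` with `u, v ∈ K`, and put `α = ⟨u,w⟩`, `β = ⟨v,w⟩`,
`a = ⟨Au,w⟩`, `b = ⟨Av,w⟩`. From `c (α - iβ) = ⟨z,w⟩ = 1` we get
`Re⟨Az,w⟩ = Re ((a - ib) / (α - iβ)) = (αa + βb) / (α² + β²)`. The numerator is `⟨A x, w⟩` for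
`x = αu + βv`, a point of the cone with `⟨x,w⟩ = α² + β² > 0`; every product in the semigroup
sends such an `x` into `±int K_ℓ`, where `⟨·,w⟩` does not vanish.
-/

open Matrix Complex

section MulVecC

variable {ι : Type*} [Fintype ι]

lemma sum_linearCombination_ofReal_mul (w : ι → ℝ) (c₁ c₂ : ℂ) (x y : ι → ℝ) :
    ∑ i, (c₁ * (x i : ℂ) + c₂ * (y i : ℂ)) * (w i : ℂ)
      = c₁ * ((x ⬝ᵥ w : ℝ) : ℂ) + c₂ * ((y ⬝ᵥ w : ℝ) : ℂ) := by
  simp only [dotProduct, Complex.ofReal_sum, Complex.ofReal_mul, Finset.mul_sum,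
    ← Finset.sum_add_distrib]
  exact Finset.sum_congr rfl fun i _ => by ring

lemma mulVecC_linearCombination_ofReal (A : Matrix ι ι ℝ) (c₁ c₂ : ℂ) (x y : ι → ℝ) :
    mulVecC A (fun i => c₁ * (x i : ℂ) + c₂ * (y i : ℂ))
      = fun i => c₁ * ((A *ᵥ x) i : ℂ) + c₂ * ((A *ᵥ y) i : ℂ) := by
  funext i
  simp only [mulVecC, mulVec, dotProduct, Matrix.map_apply, Complex.ofReal_sum,
    Complex.ofReal_mul, Finset.mul_sum, ← Finset.sum_add_distrib]
  exact Finset.sum_congr rfl fun k _ => by ring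

end MulVecC

lemma re_mul_sub_mul_I_ne_zero {c : ℂ} {α β a b : ℝ} (hc : c * (α - β * I) = 1)
    (h : α * a + β * b ≠ 0) : (c * (a - b * I)).re ≠ 0 := by
  have hζ : (α : ℂ) - β * I ≠ 0 := right_ne_zero_of_mul_eq_one hc
  rw [eq_inv_of_mul_eq_one_left hc, ← div_eq_inv_mul, Complex.div_re, ← add_div]
  refine div_ne_zero ?_ (Complex.normSq_pos.2 hζ).ne'
  simpa [mul_comm] using h

lemma re_sum_mulVecC_mul_ne_zero {ι : Type*} [Fintype ι] {K : Set (ι → ℝ)} {w : ι → ℝ}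
    {A : Matrix ι ι ℝ}
    (hK : ∀ u ∈ K, ∀ v ∈ K, ∀ α β : ℝ, 0 ≤ α → 0 ≤ β → α • u + β • v ∈ K)
    (hw : ∀ u ∈ K, 0 ≤ u ⬝ᵥ w) (hA : ∀ x ∈ K, x ≠ 0 → A *ᵥ x ⬝ᵥ w ≠ 0)
    {z : ι → ℂ} (hz : z ∈ complexify K) (hzw : ∑ i, z i * (w i : ℂ) = 1) :
    (∑ i, mulVecC A z i * (w i : ℂ)).re ≠ 0 := by
  obtain ⟨c, u, v, hu, hv, rfl⟩ := hz
  have hzuv : (fun i => c * ((u i + v i : ℂ) + I * (u i - v i))) =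
      fun i => c * (1 + I) * (u i : ℂ) + c * (1 + I) * -I * (v i : ℂ) := by
    funext i
    linear_combination (c * v i) * I_sq
  rw [hzuv, sum_linearCombination_ofReal_mul] at hzw
  rw [hzuv, mulVecC_linearCombination_ofReal, sum_linearCombination_ofReal_mul]
  set α := u ⬝ᵥ w
  set β := v ⬝ᵥ w
  have hαβ : (α : ℂ) - β * I ≠ 0 :=
    right_ne_zero_of_mul_eq_one (a := c * (1 + I)) (by linear_combination hzw)
  have hx : α • u + β • v ≠ 0 := by
    intro h
    have hsq : α * α + β * β = 0 := by
      simpa [add_dotProduct, smul_dotProduct] using congrArg (· ⬝ᵥ w) h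
    obtain ⟨hα, hβ⟩ := mul_self_add_mul_self_eq_zero.1 hsq
    simp [hα, hβ] at hαβ
  have hAx := hA _ (hK u hu v hv α β (hw u hu) (hw v hv)) hx
  rw [mulVec_add, mulVec_smul, mulVec_smul, add_dotProduct, smul_dotProduct,
    smul_dotProduct, smul_eq_mul, smul_eq_mul] at hAx
  convert re_mul_sub_mul_I_ne_zero (c := c * (1 + I)) (by linear_combination hzw) hAx using 2
  ring

def MapsIntoInteriorUpToSign {ι : Type*} [Fintype ι] (A : Matrix ι ι ℝ) (K L : Set (ι → ℝ)) :
    Prop :=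
  ∀ u ∈ K, u ≠ 0 → A *ᵥ u ∈ interior L ∨ -(A *ᵥ u) ∈ interior L

lemma MapsIntoInteriorUpToSign.mul {ι : Type*} [Fintype ι] {A B : Matrix ι ι ℝ}
    {K L M : Set (ι → ℝ)} (hA : MapsIntoInteriorUpToSign A L M)
    (hB : MapsIntoInteriorUpToSign B K L) (hL : (0 : ι → ℝ) ∉ interior L) :
    MapsIntoInteriorUpToSign (A * B) K M := by
  intro u hu hu0
  rw [← mulVec_mulVec]
  rcases hB u hu hu0 with hBu | hBu
  · exact hA _ (interior_subset hBu) (ne_of_mem_of_not_mem hBu hL)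
  · have := hA _ (interior_subset hBu) (ne_of_mem_of_not_mem hBu hL)
    rw [mulVec_neg, neg_neg] at this
    exact this.symm

lemma semigroupOf_subset {ι : Type*} [Fintype ι] [DecidableEq ι] {S T : Set (Matrix ι ι ℝ)}
    (hST : S ⊆ T) (hT : ∀ A ∈ T, ∀ B ∈ T, A * B ∈ T) : semigroupOf S ⊆ T := by
  rintro _ ⟨l, hl, hlS, rfl⟩
  induction l with
  | nil => exact absurd rfl hl
  | cons M t ih =>
    rcases eq_or_ne t [] with rfl | ht
    · simpa using hST (hlS M List.mem_cons_self)
    · rw [List.prod_cons]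
      exact hT _ (hST (hlS M List.mem_cons_self)) _
        (ih ht fun N hN => hlS N (List.mem_cons_of_mem M hN))

namespace IsMulticone

variable {ι : Type*} [Fintype ι] {S : Set (Matrix ι ι ℝ)} {m : ℕ} {K : Fin m → Set (ι → ℝ)}
  {w : ι → ℝ}

lemma dotProduct_nonneg (hK : IsMulticone S K w) {j : Fin m} {u : ι → ℝ} (hu : u ∈ K j) :
    0 ≤ u ⬝ᵥ w := by
  rcases eq_or_ne u 0 with rfl | hu0
  · simp
  · exact (hK.2.2.2.2.2.1 u (Set.mem_iUnion.2 ⟨j, hu⟩) hu0).le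

lemma smul_add_smul_mem (hK : IsMulticone S K w) {j : Fin m} {u v : ι → ℝ} (hu : u ∈ K j)
    (hv : v ∈ K j) {α β : ℝ} (hα : 0 ≤ α) (hβ : 0 ≤ β) : α • u + β • v ∈ K j := by
  have hmid := hK.2.1 j (hK.2.2.2.1 j α hα u hu) (hK.2.2.2.1 j β hβ v hv)
    (by norm_num : (0 : ℝ) ≤ 1 / 2) (by norm_num : (0 : ℝ) ≤ 1 / 2) (by norm_num)
  convert hK.2.2.2.1 j 2 zero_le_two _ hmid using 1
  module

lemma zero_notMem_interior (hK : IsMulticone S K w) (j : Fin m) :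
    (0 : ι → ℝ) ∉ interior (K j) := by
  intro h0
  have hlim : Filter.Tendsto (fun t : ℝ => t • -w) (nhdsWithin 0 (Set.Ioi 0)) (nhds 0) := by
    refine Filter.Tendsto.mono_left ?_ nhdsWithin_le_nhds
    exact (continuous_id.smul continuous_const).tendsto' 0 0 (zero_smul ℝ (-w))
  obtain ⟨t, ht, htpos⟩ :=
    ((hlim.eventually (isOpen_interior.mem_nhds h0)).and self_mem_nhdsWithin).exists
  have hww : w ⬝ᵥ w = 1 := by simpa [dotProduct, sq] using hK.2.2.2.2.1
  have := hK.dotProduct_nonneg (interior_subset ht)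
  rw [smul_dotProduct, neg_dotProduct, hww, smul_eq_mul] at this
  linarith [show (0 : ℝ) < t from htpos]

lemma dotProduct_ne_zero (hK : IsMulticone S K w) {ℓ : Fin m} {x : ι → ℝ}
    (hx : x ∈ interior (K ℓ) ∨ -x ∈ interior (K ℓ)) : x ⬝ᵥ w ≠ 0 := by
  have hpos : ∀ y ∈ interior (K ℓ), 0 < y ⬝ᵥ w := fun y hy =>
    hK.2.2.2.2.2.1 y (Set.mem_iUnion.2 ⟨ℓ, interior_subset hy⟩)
      (ne_of_mem_of_not_mem hy (hK.zero_notMem_interior ℓ))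
  rcases hx with hx | hx
  · exact (hpos x hx).ne'
  · simpa using (hpos _ hx).ne

lemma exists_mapsIntoInteriorUpToSign [DecidableEq ι] (hK : IsMulticone S K w)
    {A : Matrix ι ι ℝ} (hA : A ∈ semigroupOf S) (j : Fin m) :
    ∃ ℓ, MapsIntoInteriorUpToSign A (K j) (K ℓ) := by
  refine semigroupOf_subset (T := {B | ∀ j, ∃ ℓ, MapsIntoInteriorUpToSign B (K j) (K ℓ)})
    (fun B hB => hK.2.2.2.2.2.2.1 B hB) ?_ hA j
  intro A hA B hB j
  obtain ⟨ℓ, hBj⟩ := hB j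
  obtain ⟨ℓ', hAℓ⟩ := hA ℓ
  exact ⟨ℓ', hAℓ.mul hBj (hK.zero_notMem_interior ℓ)⟩

end IsMulticone

theorem stmt5_general {d m : ℕ}
    (S : Set (Matrix (Fin d) (Fin d) ℝ))
    (K : Fin m → Set (Fin d → ℝ)) (w : Fin d → ℝ) (hK : IsMulticone S K w)
    (Ω : Set (Fin d → ℂ))
    (hΩ : Ω = {z : Fin d → ℂ | (∃ j, z ∈ interior (complexify (K j))) ∧
      ∑ i, z i * (w i : ℂ) = 1}) :
    ∀ z ∈ Ω, ∀ A ∈ semigroupOf S, (∑ i, mulVecC A z i * (w i : ℂ)).re ≠ 0 := by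
  rintro z hz A hA
  rw [hΩ] at hz
  obtain ⟨⟨j, hzj⟩, hzw⟩ := hz
  obtain ⟨ℓ, hAj⟩ := hK.exists_mapsIntoInteriorUpToSign hA j
  exact re_sum_mulVecC_mul_ne_zero (fun u hu v hv _ _ => hK.smul_add_smul_mem hu hv)
    (fun _ => hK.dotProduct_nonneg) (fun x hx hx0 => hK.dotProduct_ne_zero (hAj x hx hx0))
    (interior_subset hzj) hzw

/-- Theorem 3.1(iii): for every z ∈ Ω and A in the generated semigroup, Re⟨Az,w⟩ ≠ 0. -/
theorem stmt5 {d m : ℕ} (hd : 1 ≤ d) (hm : 0 < m)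
    (S : Set (Matrix (Fin d) (Fin d) ℝ)) (hSne : S.Nonempty) (hScpt : IsCompact S)
    (K : Fin m → Set (Fin d → ℝ)) (w : Fin d → ℝ) (hK : IsMulticone S K w)
    (Ω : Set (Fin d → ℂ))
    (hΩ : Ω = {z : Fin d → ℂ | (∃ j, z ∈ interior (complexify (K j))) ∧
      ∑ i, z i * (w i : ℂ) = 1}) :
    ∀ z ∈ Ω, ∀ A ∈ semigroupOf S, (∑ i, mulVecC A z i * (w i : ℂ)).re ≠ 0 :=
  stmt5_general S K w hK Ω hΩ
end

section
/- Let d ≥ 1 and let 𝖠 ⊆ M_d(ℝ) be compact and nonempty with a multicone (K_1,…,K_m) and transverse-defining vector w, and let Ω := {z ∈ ℂ^d : z ∈ ∪_{j=1}^m int(K_j^ℂ) and ⟨z,w⟩ = 1}. Then Ω is a nonempty, bounded subset of the complex hyperplane {z ∈ ℂ^d : ⟨z,w⟩ = 1} which is open in the subspace topology of that hyperplane, and for every A ∈ 𝒮(𝖠) and z ∈ Ω one has ⟨Az,w⟩ ≠ 0 and Āz := ⟨Az,w⟩^{-1} Az ∈ Ω; in particular the map Ā : Ω → Ω is well-defined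 for every A ∈ 𝒮(𝖠). -/
open scoped BigOperators Pointwise

/-!
Write `ψ(u, v) = (u + v) + i(u - v)`, so that `K^ℂ = ℂ · ψ(K × K)`; `ψ` is a real-linear
isomorphism, so `ψ(int K × int K)` is open. Transversality and compactness of `K ∩ S^{d-1}` give
`δ‖u‖ ≤ ⟨u, w⟩` on `K`, hence `δ‖z‖ ≤ |⟨z, w⟩|` on `K^ℂ`: this bounds `Ω` and makes `⟨z, w⟩`
nonzero at every nonzero `z ∈ K^ℂ`. A real matrix maps `c ψ(u, v)` to `c ψ(Au, Av)`, and
`ψ(p, q)` is a unit multiple of `ψ(-q, p)`, `ψ(q, -p)` and `ψ(-p, -q)`, so the sign ambiguity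
in the multicone condition is harmless: `A` maps `K_j^ℂ ∖ {0}` into `int K_ℓ^ℂ ∖ {0}`, and
dividing by `⟨Az, w⟩` lands back in `Ω`.
-/

open Set Filter Topology Matrix Complex

def complexifyPair (x y : ℝ) : ℂ := ((x : ℂ) + (y : ℂ)) + I * ((x : ℂ) - (y : ℂ))

@[simp] lemma complexifyPair_re (x y : ℝ) : (complexifyPair x y).re = x + y := by
  simp [complexifyPair]

@[simp] lemma complexifyPair_im (x y : ℝ) : (complexifyPair x y).im = x - y := by
  simp [complexifyPair]

lemma complexifyPair_eq_zero_iff {x y : ℝ} : complexifyPair x y = 0 ↔ x = 0 ∧ y = 0 := by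
  rw [Complex.ext_iff, complexifyPair_re, complexifyPair_im, zero_re, zero_im]
  constructor
  · rintro ⟨h₁, h₂⟩
    constructor <;> linarith
  · rintro ⟨rfl, rfl⟩
    norm_num

lemma complexifyPair_mul (r x y : ℝ) :
    complexifyPair (r * x) (r * y) = r * complexifyPair x y := by
  simp only [complexifyPair]
  push_cast
  ring

lemma norm_complexifyPair_le {x y a b : ℝ} (hx : |x| ≤ a) (hy : |y| ≤ b) :
    ‖complexifyPair x y‖ ≤ ‖complexifyPair a b‖ := by
  rw [Complex.norm_def, Complex.norm_def]
  apply Real.sqrt_le_sqrt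
  simp only [normSq_apply, complexifyPair_re, complexifyPair_im]
  nlinarith [sq_abs x, sq_abs y, abs_nonneg x, abs_nonneg y]

section Complexify

variable {ι : Type*} {K : Set (ι → ℝ)}

def complexifyVec (u v : ι → ℝ) : ι → ℂ := fun i => complexifyPair (u i) (v i)

lemma mem_complexify_iff {z : ι → ℂ} :
    z ∈ complexify K ↔ ∃ (c : ℂ) (u v : ι → ℝ), u ∈ K ∧ v ∈ K ∧ z = c • complexifyVec u v :=
  Iff.rfl

lemma complexifyVec_eq_zero_iff {u v : ι → ℝ} : complexifyVec u v = 0 ↔ u = 0 ∧ v = 0 := by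
  simp only [funext_iff, complexifyVec, Pi.zero_apply, complexifyPair_eq_zero_iff, forall_and]

lemma complexifyVec_zero_left (v : ι → ℝ) :
    complexifyVec 0 v = ((1 - I) / 2) • complexifyVec v v := by
  funext i
  apply Complex.ext <;> simp [complexifyVec] <;> ring

lemma complexifyVec_zero_right (u : ι → ℝ) :
    complexifyVec u 0 = ((1 + I) / 2) • complexifyVec u u := by
  funext i
  apply Complex.ext <;> simp [complexifyVec] <;> ring

lemma complexifyVec_eq_neg_one_smul (p q : ι → ℝ) :
    complexifyVec p q = (-1 : ℂ) • complexifyVec (-p) (-q) := by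
  funext i
  apply Complex.ext <;> simp [complexifyVec] <;> ring

lemma complexifyVec_eq_I_smul (p q : ι → ℝ) :
    complexifyVec p q = I • complexifyVec (-q) p := by
  funext i
  apply Complex.ext <;> simp [complexifyVec]
  ring

lemma complexifyVec_eq_neg_I_smul (p q : ι → ℝ) :
    complexifyVec p q = -I • complexifyVec q (-p) := by
  funext i
  apply Complex.ext <;> simp [complexifyVec] <;> ring

lemma smul_mem_complexify (c : ℂ) {z : ι → ℂ} (hz : z ∈ complexify K) :
    c • z ∈ complexify K := by
  obtain ⟨c', u, v, hu, hv, rfl⟩ := mem_complexify_iff.1 hz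
  exact mem_complexify_iff.2 ⟨c * c', u, v, hu, hv, (mul_smul c c' _).symm⟩

lemma smul_complexify {c : ℂ} (hc : c ≠ 0) : c • complexify K = complexify K :=
  (smul_set_subset_iff.2 fun _ hz => smul_mem_complexify c hz).antisymm
    fun z hz => ⟨c⁻¹ • z, smul_mem_complexify _ hz, smul_inv_smul₀ hc z⟩

lemma smul_mem_interior_complexify {c : ℂ} (hc : c ≠ 0) {z : ι → ℂ}
    (hz : z ∈ interior (complexify K)) : c • z ∈ interior (complexify K) := by
  rw [← smul_complexify hc, interior_smul₀ hc]
  exact smul_mem_smul_set hz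

lemma complexifyVec_mem_interior_complexify_of_mem_interior {p q : ι → ℝ}
    (hp : p ∈ interior K) (hq : q ∈ interior K) :
    complexifyVec p q ∈ interior (complexify K) := by
  let coords : (ι → ℂ) → (ι → ℝ) × (ι → ℝ) := fun z =>
    (fun i => ((z i).re + (z i).im) / 2, fun i => ((z i).re - (z i).im) / 2)
  have hcoords : ∀ z, complexifyVec (coords z).1 (coords z).2 = z := fun z => by
    funext i
    apply Complex.ext <;> simp [coords, complexifyVec] <;> ring
  refine mem_interior.2 ⟨coords ⁻¹' (interior K ×ˢ interior K), fun z hz => ?_,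
    (isOpen_interior.prod isOpen_interior).preimage (by fun_prop), ?_⟩
  · exact mem_complexify_iff.2
      ⟨1, _, _, interior_subset hz.1, interior_subset hz.2, by rw [one_smul, hcoords]⟩
  · have hpq : coords (complexifyVec p q) = (p, q) := by
      ext i <;> simp [coords, complexifyVec]
    simpa [hpq] using And.intro hp hq

lemma complexifyVec_mem_interior_complexify {p q : ι → ℝ}
    (hp : p ∈ interior K ∨ -p ∈ interior K) (hq : q ∈ interior K ∨ -q ∈ interior K) :
    complexifyVec p q ∈ interior (complexify K) := by
  have hI : I ≠ 0 := I_ne_zero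
  rcases hp with hp | hp <;> rcases hq with hq | hq
  · exact complexifyVec_mem_interior_complexify_of_mem_interior hp hq
  · rw [complexifyVec_eq_I_smul p q]
    exact smul_mem_interior_complexify hI
      (complexifyVec_mem_interior_complexify_of_mem_interior hq hp)
  · rw [complexifyVec_eq_neg_I_smul p q]
    exact smul_mem_interior_complexify (neg_ne_zero.2 hI)
      (complexifyVec_mem_interior_complexify_of_mem_interior hq hp)
  · rw [complexifyVec_eq_neg_one_smul p q]
    exact smul_mem_interior_complexify (by norm_num)
      (complexifyVec_mem_interior_complexify_of_mem_interior hp hq)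

-- The multicone condition only controls the images of nonzero vectors.
lemma exists_smul_complexifyVec_of_mem_complexify {z : ι → ℂ} (hz : z ∈ complexify K)
    (hz0 : z ≠ 0) :
    ∃ (c : ℂ) (u v : ι → ℝ), u ∈ K ∧ v ∈ K ∧ u ≠ 0 ∧ v ≠ 0 ∧ c ≠ 0 ∧
      z = c • complexifyVec u v := by
  obtain ⟨c, u, v, hu, hv, rfl⟩ := mem_complexify_iff.1 hz
  have hc : c ≠ 0 := by rintro rfl; simp at hz0
  have h2 : (2 : ℂ) ≠ 0 := two_ne_zero
  rcases eq_or_ne u 0 with rfl | hu0 <;> rcases eq_or_ne v 0 with rfl | hv0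
  · simp [complexifyVec_eq_zero_iff.2 ⟨rfl, rfl⟩] at hz0
  · refine ⟨c * ((1 - I) / 2), v, v, hv, hv, hv0, hv0, ?_,
      by rw [complexifyVec_zero_left, mul_smul]⟩
    simp [hc, h2, sub_eq_zero, Complex.ext_iff]
  · refine ⟨c * ((1 + I) / 2), u, u, hu, hu, hu0, hu0, ?_,
      by rw [complexifyVec_zero_right, mul_smul]⟩
    simp [hc, h2, add_eq_zero_iff_eq_neg, Complex.ext_iff]
  · exact ⟨c, u, v, hu, hv, hu0, hv0, hc, rfl⟩

variable [Fintype ι] {w : ι → ℝ}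

lemma complexifyVec_dotProduct (u v w : ι → ℝ) :
    complexifyVec u v ⬝ᵥ (fun i => (w i : ℂ)) = complexifyPair (u ⬝ᵥ w) (v ⬝ᵥ w) := by
  apply Complex.ext <;>
    simp [complexifyVec, dotProduct, add_mul, sub_mul, Finset.sum_add_distrib,
      Finset.sum_sub_distrib]

lemma zero_notMem_interior (hw : w ≠ 0) (htr : ∀ u ∈ K, u ≠ 0 → 0 < u ⬝ᵥ w) :
    (0 : ι → ℝ) ∉ interior K := by
  intro h0
  have hK : ∀ᶠ t : ℝ in 𝓝 0, t • w ∈ K :=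
    (continuous_id.smul continuous_const).tendsto' 0 0 (zero_smul ℝ w)
      (mem_interior_iff_mem_nhds.1 h0)
  have hK' : ∀ᶠ t : ℝ in 𝓝 0, (-t) • w ∈ K :=
    (continuous_neg.tendsto' 0 0 neg_zero).eventually hK
  obtain ⟨t, ⟨ht, ht'⟩, ht0⟩ :=
    ((hK.and hK').filter_mono nhdsWithin_le_nhds |>.and self_mem_nhdsWithin).exists
      (f := 𝓝[≠] 0)
  have hpos := htr _ ht (smul_ne_zero ht0 hw)
  have hneg := htr _ ht' (smul_ne_zero (neg_ne_zero.2 ht0) hw)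
  rw [neg_smul, neg_dotProduct] at hneg
  linarith

section Transverse

variable (hcl : IsClosed K) (hcone : ∀ c : ℝ, 0 ≤ c → ∀ u ∈ K, c • u ∈ K)
  (htr : ∀ u ∈ K, u ≠ 0 → 0 < u ⬝ᵥ w)
include hcl hcone htr

lemma exists_pos_mul_norm_le_dotProduct : ∃ δ > 0, ∀ u ∈ K, δ * ‖u‖ ≤ u ⬝ᵥ w := by
  obtain ⟨δ, hδ, hδK⟩ := ((isCompact_sphere (0 : ι → ℝ) 1).inter_left hcl).exists_forall_le'
    (by fun_prop : Continuous fun u : ι → ℝ => u ⬝ᵥ w).continuousOn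
    fun u hu => htr u hu.1 (ne_zero_of_mem_unit_sphere (x := ⟨u, hu.2⟩))
  refine ⟨δ, hδ, fun u hu => ?_⟩
  rcases eq_or_ne u 0 with rfl | hu0
  · simp
  have hunit := hδK (‖u‖⁻¹ • u) ⟨hcone _ (by positivity) u hu, by simp [norm_smul, hu0]⟩
  rw [smul_dotProduct, smul_eq_mul, le_inv_mul_iff₀ (norm_pos_iff.2 hu0)] at hunit
  linarith

lemma exists_pos_mul_norm_le_norm_dotProduct_of_mem_complexify :
    ∃ δ > 0, ∀ z ∈ complexify K, δ * ‖z‖ ≤ ‖z ⬝ᵥ (fun i => (w i : ℂ))‖ := by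
  obtain ⟨δ, hδ, hδK⟩ := exists_pos_mul_norm_le_dotProduct hcl hcone htr
  refine ⟨δ, hδ, fun z hz => ?_⟩
  obtain ⟨c, u, v, hu, hv, rfl⟩ := mem_complexify_iff.1 hz
  have hcoord : ∀ {x : ι → ℝ}, x ∈ K → ∀ i, |δ * x i| ≤ x ⬝ᵥ w := fun {x} hx i =>
    calc |δ * x i| = δ * ‖x i‖ := by rw [abs_mul, abs_of_pos hδ, Real.norm_eq_abs]
      _ ≤ δ * ‖x‖ := by gcongr; exact norm_le_pi_norm x i
      _ ≤ x ⬝ᵥ w := hδK x hx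
  have hvec : δ * ‖complexifyVec u v‖ ≤ ‖complexifyPair (u ⬝ᵥ w) (v ⬝ᵥ w)‖ := by
    rw [← le_inv_mul_iff₀ hδ, pi_norm_le_iff_of_nonneg (by positivity)]
    intro i
    calc ‖complexifyVec u v i‖ = δ⁻¹ * ‖complexifyPair (δ * u i) (δ * v i)‖ := by
          rw [complexifyPair_mul, norm_mul, Complex.norm_real, Real.norm_of_nonneg hδ.le,
            inv_mul_cancel_left₀ hδ.ne']
          rfl
      _ ≤ δ⁻¹ * ‖complexifyPair (u ⬝ᵥ w) (v ⬝ᵥ w)‖ := by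
          gcongr
          exact norm_complexifyPair_le (hcoord hu i) (hcoord hv i)
  rw [smul_dotProduct, complexifyVec_dotProduct, norm_smul, norm_smul]
  calc δ * (‖c‖ * ‖complexifyVec u v‖) = ‖c‖ * (δ * ‖complexifyVec u v‖) := by ring
    _ ≤ _ := by gcongr

lemma dotProduct_ne_zero_of_mem_complexify {z : ι → ℂ} (hz : z ∈ complexify K) (hz0 : z ≠ 0) :
    z ⬝ᵥ (fun i => (w i : ℂ)) ≠ 0 := by
  obtain ⟨δ, hδ, hδK⟩ := exists_pos_mul_norm_le_norm_dotProduct_of_mem_complexify hcl hcone htr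
  exact norm_pos_iff.1 ((mul_pos hδ (norm_pos_iff.2 hz0)).trans_le (hδK z hz))

lemma isBounded_complexify_inter_dotProduct_eq_one :
    Bornology.IsBounded {z | z ∈ complexify K ∧ z ⬝ᵥ (fun i => (w i : ℂ)) = 1} := by
  obtain ⟨δ, hδ, hδK⟩ := exists_pos_mul_norm_le_norm_dotProduct_of_mem_complexify hcl hcone htr
  refine isBounded_iff_forall_norm_le.2 ⟨δ⁻¹, fun z ⟨hz, hz1⟩ => ?_⟩
  rw [← mul_one δ⁻¹, le_inv_mul_iff₀ hδ]
  simpa [hz1] using hδK z hz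

end Transverse

lemma inv_dotProduct_smul_mem_interior_complexify {z : ι → ℂ}
    (hz : z ∈ interior (complexify K)) (hdot : z ⬝ᵥ (fun i => (w i : ℂ)) ≠ 0) :
    (z ⬝ᵥ (fun i => (w i : ℂ)))⁻¹ • z ∈ interior (complexify K) ∧
      ((z ⬝ᵥ (fun i => (w i : ℂ)))⁻¹ • z) ⬝ᵥ (fun i => (w i : ℂ)) = 1 :=
  ⟨smul_mem_interior_complexify (inv_ne_zero hdot) hz,
    by rw [smul_dotProduct, smul_eq_mul, inv_mul_cancel₀ hdot]⟩

lemma exists_mem_interior_complexify_dotProduct_eq_one {p : ι → ℝ} (hp : p ∈ interior K)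
    (hpw : p ⬝ᵥ w ≠ 0) :
    ∃ z ∈ interior (complexify K), z ⬝ᵥ (fun i => (w i : ℂ)) = 1 := by
  have hpp := complexifyVec_mem_interior_complexify_of_mem_interior hp hp
  have hdot : complexifyVec p p ⬝ᵥ (fun i => (w i : ℂ)) ≠ 0 := by
    rwa [complexifyVec_dotProduct, Ne, complexifyPair_eq_zero_iff, and_self]
  exact ⟨_, inv_dotProduct_smul_mem_interior_complexify hpp hdot⟩

lemma mulVecC_mul (A B : Matrix ι ι ℝ) (z : ι → ℂ) :
    mulVecC (A * B) z = mulVecC A (mulVecC B z) := by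
  rw [mulVecC, mulVecC, mulVecC, mulVec_mulVec]
  exact congrArg (· *ᵥ z) (Matrix.map_mul (f := Complex.ofRealHom))

lemma mulVecC_smul (A : Matrix ι ι ℝ) (c : ℂ) (z : ι → ℂ) :
    mulVecC A (c • z) = c • mulVecC A z :=
  mulVec_smul _ c z

lemma mulVecC_complexifyVec (A : Matrix ι ι ℝ) (u v : ι → ℝ) :
    mulVecC A (complexifyVec u v) = complexifyVec (A *ᵥ u) (A *ᵥ v) := by
  funext i
  apply Complex.ext <;>
    simp [mulVecC, complexifyVec, mulVec, dotProduct, mul_add, mul_sub, Finset.sum_add_distrib,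
      Finset.sum_sub_distrib]

lemma mapsTo_mulVecC_of_mem_semigroupOf [DecidableEq ι] {S : Set (Matrix ι ι ℝ)}
    {X : Set (ι → ℂ)} (hS : ∀ A ∈ S, MapsTo (mulVecC A) X X) {B : Matrix ι ι ℝ}
    (hB : B ∈ semigroupOf S) : MapsTo (mulVecC B) X X := by
  obtain ⟨l, -, hl, rfl⟩ := hB
  induction l with
  | nil =>
    intro z hz
    simpa [mulVecC] using hz
  | cons A l ih =>
    rw [List.prod_cons, show mulVecC (A * l.prod) = mulVecC A ∘ mulVecC l.prod from
      funext (mulVecC_mul A l.prod)]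
    exact (hS A (hl A List.mem_cons_self)).comp
      (ih fun M hM => hl M (List.mem_cons_of_mem A hM))

lemma mulVecC_mem_interior_complexify {L : Set (ι → ℝ)} {A : Matrix ι ι ℝ}
    (hL : (0 : ι → ℝ) ∉ interior L)
    (hA : ∀ u ∈ K, u ≠ 0 → A *ᵥ u ∈ interior L ∨ -(A *ᵥ u) ∈ interior L)
    {z : ι → ℂ} (hz : z ∈ complexify K) (hz0 : z ≠ 0) :
    mulVecC A z ∈ interior (complexify L) ∧ mulVecC A z ≠ 0 := by
  obtain ⟨c, u, v, hu, hv, hu0, hv0, hc, rfl⟩ :=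
    exists_smul_complexifyVec_of_mem_complexify hz hz0
  have hAu := hA u hu hu0
  rw [mulVecC_smul, mulVecC_complexifyVec]
  refine ⟨smul_mem_interior_complexify hc
    (complexifyVec_mem_interior_complexify hAu (hA v hv hv0)), smul_ne_zero hc ?_⟩
  rw [Ne, complexifyVec_eq_zero_iff]
  rintro ⟨hAu0, -⟩
  rw [hAu0, neg_zero, or_self] at hAu
  exact hL hAu

lemma mapsTo_mulVecC_iUnion_interior_complexify {κ : Type*} {S : Set (Matrix ι ι ℝ)}
    {K : κ → Set (ι → ℝ)} (hK0 : ∀ j, (0 : ι → ℝ) ∉ interior (K j))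
    (hmap : ∀ A ∈ S, ∀ j, ∃ ℓ, ∀ u ∈ K j, u ≠ 0 →
      A *ᵥ u ∈ interior (K ℓ) ∨ -(A *ᵥ u) ∈ interior (K ℓ))
    {A : Matrix ι ι ℝ} (hA : A ∈ S) :
    MapsTo (mulVecC A) ((⋃ j, interior (complexify (K j))) \ {0})
      ((⋃ j, interior (complexify (K j))) \ {0}) := by
  rintro z ⟨hz, hz0⟩
  obtain ⟨j, hz⟩ := mem_iUnion.1 hz
  obtain ⟨ℓ, hℓ⟩ := hmap A hA j
  obtain ⟨hAz, hAz0⟩ := mulVecC_mem_interior_complexify (hK0 ℓ) hℓ (interior_subset hz) hz0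
  exact ⟨mem_iUnion.2 ⟨ℓ, hAz⟩, hAz0⟩

end Complexify

theorem stmt6_general {d m : ℕ} (hm : 0 < m)
    (S : Set (Matrix (Fin d) (Fin d) ℝ))
    (K : Fin m → Set (Fin d → ℝ)) (w : Fin d → ℝ) (hK : IsMulticone S K w)
    (Ω : Set (Fin d → ℂ))
    (hΩ : Ω = {z : Fin d → ℂ | (∃ j, z ∈ interior (complexify (K j))) ∧
      ∑ i, z i * (w i : ℂ) = 1}) :
    Ω.Nonempty ∧ Bornology.IsBounded Ω ∧
    (∃ U : Set (Fin d → ℂ), IsOpen U ∧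
      Ω = U ∩ {z : Fin d → ℂ | ∑ i, z i * (w i : ℂ) = 1}) ∧
    (∀ A ∈ semigroupOf S, ∀ z ∈ Ω,
      (∑ i, mulVecC A z i * (w i : ℂ)) ≠ 0 ∧
      (∑ i, mulVecC A z i * (w i : ℂ))⁻¹ • mulVecC A z ∈ Ω) := by
  obtain ⟨hcl, -, hint, hcone, hw1, htr, hmap, -⟩ := hK
  have htr' : ∀ j, ∀ u ∈ K j, u ≠ 0 → 0 < u ⬝ᵥ w := fun j u hu => htr u (mem_iUnion.2 ⟨j, hu⟩)
  have hK0 : ∀ j, (0 : Fin d → ℝ) ∉ interior (K j) := fun j =>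
    zero_notMem_interior (by rintro rfl; simp at hw1) (htr' j)
  subst hΩ
  refine ⟨?_, ?_, ⟨⋃ j, interior (complexify (K j)), isOpen_iUnion fun _ => isOpen_interior,
    by ext; simp⟩, fun A hA z ⟨⟨j, hz⟩, hz1⟩ => ?_⟩
  · obtain ⟨p, hp⟩ := hint ⟨0, hm⟩
    have hpw := htr' _ p (interior_subset hp) (ne_of_mem_of_not_mem hp (hK0 _))
    obtain ⟨z, hz, hz1⟩ := exists_mem_interior_complexify_dotProduct_eq_one hp hpw.ne'
    exact ⟨z, ⟨_, hz⟩, hz1⟩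
  · exact (Bornology.isBounded_iUnion.2 fun j => isBounded_complexify_inter_dotProduct_eq_one
      (hcl j) (hcone j) (htr' j)).subset
      fun z ⟨⟨j, hz⟩, hz1⟩ => mem_iUnion.2 ⟨j, interior_subset hz, hz1⟩
  · have hz0 : z ≠ 0 := by rintro rfl; simp at hz1
    obtain ⟨hAz, hAz0⟩ := mapsTo_mulVecC_of_mem_semigroupOf
      (fun A hA => mapsTo_mulVecC_iUnion_interior_complexify hK0 hmap hA) hA
      ⟨mem_iUnion.2 ⟨j, hz⟩, hz0⟩
    obtain ⟨ℓ, hAz⟩ := mem_iUnion.1 hAz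
    have hAw := dotProduct_ne_zero_of_mem_complexify (hcl ℓ) (hcone ℓ) (htr' ℓ)
      (interior_subset hAz) hAz0
    obtain ⟨hmem, hone⟩ := inv_dotProduct_smul_mem_interior_complexify hAz hAw
    exact ⟨hAw, ⟨ℓ, hmem⟩, hone⟩

/-- Theorem 3.1(iv): Ω is a nonempty bounded relatively open subset of the hyperplane
⟨z,w⟩ = 1, on which each Ā (A in the generated semigroup) is a well-defined self-map. -/
theorem stmt6 {d m : ℕ} (hd : 1 ≤ d) (hm : 0 < m)
    (S : Set (Matrix (Fin d) (Fin d) ℝ)) (hSne : S.Nonempty) (hScpt : IsCompact S)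
    (K : Fin m → Set (Fin d → ℝ)) (w : Fin d → ℝ) (hK : IsMulticone S K w)
    (Ω : Set (Fin d → ℂ))
    (hΩ : Ω = {z : Fin d → ℂ | (∃ j, z ∈ interior (complexify (K j))) ∧
      ∑ i, z i * (w i : ℂ) = 1}) :
    Ω.Nonempty ∧ Bornology.IsBounded Ω ∧
    (∃ U : Set (Fin d → ℂ), IsOpen U ∧
      Ω = U ∩ {z : Fin d → ℂ | ∑ i, z i * (w i : ℂ) = 1}) ∧
    (∀ A ∈ semigroupOf S, ∀ z ∈ Ω,
      (∑ i, mulVecC A z i * (w i : ℂ)) ≠ 0 ∧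
      (∑ i, mulVecC A z i * (w i : ℂ))⁻¹ • mulVecC A z ∈ Ω) :=
  stmt6_general hm S K w hK Ω hΩ
end
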